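/- For |z| < 1 and integers t \geq 1, 0 \leq \ell < t, the theta function \Theta_{\ell,t}(z) := \sum_{m \in \mathbb{Z}^t, \sum m_i = 0, \sum i\cdot m_{i+1} \equiv \ell \ (mod\ t)} z^{\|m\|^2/2 + (\sum_{i=0}^{t-1} i\, m_{i+1})/t} satisfies \Theta_{\ell,t}(z) = (z;z)_\infty^t \cdot \sum_{m \geq 0, m \equiv \ell \ (mod\ t)} p(m) z^{m/t}, where p is the partition function and (z;z)_\infty = \prod_{k\geq 1}(1-z^k). -/

import Mathlib

/-
Encode a partition `λ` with at most `N` parts by its beta-set `{λ_{N-1-j} + j : j < N}`, an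
`N`-element set of naturals whose sum is `|λ| + N(N-1)/2`. For `N = t s`, splitting the beta-set
by residues mod `t` gives `t` beta-sets of sizes `s + c r`, i.e. a charge vector `c` with
`∑ c = 0` together with `t` partitions `μ r` (the `t`-quotient), and this is a bijection once `s`
is large. Comparing the sums of the beta-sets gives `|λ| = t ‖c‖²/2 + b·c + t ∑ |μ r|`, and
`b·c ≡ |λ| (mod t)`. So the partitions of size `≡ ℓ (mod t)`, weighted by `z^{|λ|/t}`, sum to
`Θ_{ℓ,t}(z) (∑_μ z^{|μ|})^t`, and Euler's identity `(z;z)_∞ ∑_μ z^{|μ|} = 1` gives the theorem.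
-/

open Finset

namespace ThetaPartition

abbrev Partitions := Σ n : ℕ, Nat.Partition n

namespace Partitions

theorem ext_parts {p q : Partitions} (h : p.2.parts = q.2.parts) : p = q := by
  obtain ⟨n, p⟩ := p
  obtain ⟨m, q⟩ := q
  obtain rfl : n = m := by rw [← p.parts_sum, ← q.parts_sum, h]
  simpa using Nat.Partition.ext h

def ofMultiset (m : Multiset ℕ) : Partitions :=
  ⟨(m.filter (0 < ·)).sum, ⟨m.filter (0 < ·), fun hi => (Multiset.mem_filter.1 hi).2, rfl⟩⟩

def padded (N : ℕ) (q : Partitions) : Multiset ℕ :=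
  q.2.parts + Multiset.replicate (N - q.2.parts.card) 0

theorem ofMultiset_padded (N : ℕ) (q : Partitions) : ofMultiset (padded N q) = q := by
  refine ext_parts (show (padded N q).filter (0 < ·) = q.2.parts from ?_)
  rw [padded, Multiset.filter_add, Multiset.filter_eq_self.2 fun _ => q.2.parts_pos,
    Multiset.filter_eq_nil.2 fun a ha => by simp [Multiset.eq_of_mem_replicate ha], add_zero]

theorem card_padded {N : ℕ} {q : Partitions} (h : q.2.parts.card ≤ N) :
    (padded N q).card = N := by
  simp only [padded, Multiset.card_add, Multiset.card_replicate]
  omega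

theorem sum_padded (N : ℕ) (q : Partitions) : (padded N q).sum = q.1 := by
  simp [padded, q.2.parts_sum]

theorem padded_ofMultiset {N : ℕ} {m : Multiset ℕ} (h : m.card = N) :
    padded N (ofMultiset m) = m := by
  have hsplit := Multiset.filter_add_not (0 < ·) m
  have hcard := congrArg Multiset.card hsplit
  rw [Multiset.card_add] at hcard
  have hzero : m.filter (fun x => ¬0 < x) = Multiset.replicate (N - (m.filter (0 < ·)).card) 0 :=
    Multiset.eq_replicate.2 ⟨by omega, fun b hb => by simpa using (Multiset.mem_filter.1 hb).2⟩
  show m.filter (0 < ·) + Multiset.replicate (N - (m.filter (0 < ·)).card) 0 = m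
  rw [← hzero]
  exact hsplit

theorem card_parts_ofMultiset_le (m : Multiset ℕ) : (ofMultiset m).2.parts.card ≤ m.card :=
  Multiset.card_le_card (Multiset.filter_le _ _)

theorem card_parts_le_size (q : Partitions) : q.2.parts.card ≤ q.1 := by
  simpa [q.2.parts_sum] using Multiset.card_nsmul_le_sum (a := 1) fun _ hx => q.2.parts_pos hx

end Partitions

open Partitions

/-! ### Beta-sets -/

def sortedPadded (N : ℕ) (q : Partitions) (j : Fin N) : ℕ :=
  (padded N q).sort.getD j 0

theorem monotone_sortedPadded (N : ℕ) (q : Partitions) : Monotone (sortedPadded N q) := by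
  intro i j hij
  have hlen : N ≤ (padded N q).sort.length := by
    rw [Multiset.length_sort, padded, Multiset.card_add, Multiset.card_replicate]
    omega
  simp only [sortedPadded, List.getD_eq_getElem _ _ (i.2.trans_le hlen),
    List.getD_eq_getElem _ _ (j.2.trans_le hlen)]
  exact (List.sortedLE_iff_pairwise.2 (Multiset.pairwise_sort _ _)).getElem_le_getElem_of_le hij

theorem map_sortedPadded {N : ℕ} {q : Partitions} (h : q.2.parts.card ≤ N) :
    univ.val.map (sortedPadded N q) = padded N q := by
  have hlen : (padded N q).sort.length = N := by rw [Multiset.length_sort, card_padded h]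
  rw [Fin.univ_val_map, ← Multiset.sort_eq (padded N q) (· ≤ ·)]
  congr 1
  refine List.ext_getElem (by simp [hlen]) fun j h₁ h₂ => ?_
  rw [List.getElem_ofFn, sortedPadded, List.getD_eq_getElem _ _ h₂]

def betaSet (N : ℕ) (q : Partitions) : Finset ℕ :=
  univ.image fun j : Fin N => sortedPadded N q j + j

def ofBetaSet (N : ℕ) (S : Finset ℕ) : Partitions :=
  ofMultiset (univ.val.map fun j : Fin N => S.sort.getD j 0 - j)

theorem strictMono_sortedPadded_add (N : ℕ) (q : Partitions) :
    StrictMono fun j : Fin N => sortedPadded N q j + j :=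
  (monotone_sortedPadded N q).add_strictMono Fin.val_strictMono

theorem card_betaSet (N : ℕ) (q : Partitions) : (betaSet N q).card = N := by
  rw [betaSet, card_image_of_injective _ (strictMono_sortedPadded_add N q).injective, card_univ,
    Fintype.card_fin]

theorem sum_betaSet {N : ℕ} {q : Partitions} (h : q.2.parts.card ≤ N) :
    ∑ x ∈ betaSet N q, x = q.1 + ∑ j ∈ range N, j := by
  rw [betaSet, sum_image fun _ _ _ _ hij => (strictMono_sortedPadded_add N q).injective hij,
    sum_add_distrib, ← sum_map_val, map_sortedPadded h, sum_padded,
    Fin.sum_univ_eq_sum_range (fun j => j)]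

theorem sort_betaSet_getD (N : ℕ) (q : Partitions) (j : Fin N) :
    (betaSet N q).sort.getD j 0 = sortedPadded N q j + j := by
  have h := orderEmbOfFin_unique (card_betaSet N q)
    (fun j => mem_image_of_mem _ (mem_univ j)) (strictMono_sortedPadded_add N q)
  rw [congrFun h j, orderEmbOfFin_apply, List.getD_eq_getElem]
  rfl

theorem ofBetaSet_betaSet {N : ℕ} {q : Partitions} (h : q.2.parts.card ≤ N) :
    ofBetaSet N (betaSet N q) = q := by
  simp only [ofBetaSet, sort_betaSet_getD, Nat.add_sub_cancel]
  rw [map_sortedPadded h, ofMultiset_padded]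

theorem val_le_of_strictMono {N : ℕ} {e : Fin N → ℕ} (he : StrictMono e) :
    ∀ j : Fin N, (j : ℕ) ≤ e j
  | ⟨0, _⟩ => Nat.zero_le _
  | ⟨k + 1, hk⟩ =>
    (val_le_of_strictMono he ⟨k, by omega⟩).trans_lt (he (Fin.mk_lt_mk.2 k.lt_succ_self))

theorem monotone_sub_val_of_strictMono {N : ℕ} {e : Fin N → ℕ} (he : StrictMono e) :
    Monotone fun j : Fin N => e j - j := by
  cases N with
  | zero => exact fun i => i.elim0
  | succ N =>
    refine Fin.monotone_iff_le_succ.2 fun j => ?_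
    have := he (Fin.castSucc_lt_succ (i := j))
    simp only [Fin.val_castSucc, Fin.val_succ]
    omega

theorem betaSet_ofBetaSet {N : ℕ} {S : Finset ℕ} (h : S.card = N) :
    betaSet N (ofBetaSet N S) = S := by
  set e := S.orderEmbOfFin h
  have he : ∀ j : Fin N, S.sort.getD j 0 = e j := fun j => by
    rw [orderEmbOfFin_apply, List.getD_eq_getElem]
    rfl
  have hd := monotone_sub_val_of_strictMono e.strictMono
  have hpadded : padded N (ofBetaSet N S) = ↑(List.ofFn fun j : Fin N => e j - j) := by
    rw [ofBetaSet, padded_ofMultiset (by simp), Fin.univ_val_map]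
    simp only [he]
  have hsorted : ∀ j : Fin N, sortedPadded N (ofBetaSet N S) j = e j - j := fun j => by
    rw [sortedPadded, hpadded, Multiset.coe_sort, List.mergeSort_eq_self _
      (List.sortedLE_iff_pairwise.1 (List.sortedLE_ofFn_iff.2 hd)),
      List.getD_eq_getElem _ _ (by simp), List.getElem_ofFn]
  simp only [betaSet, hsorted, Nat.sub_add_cancel (val_le_of_strictMono e.strictMono _)]
  exact image_orderEmbOfFin_univ S h

theorem card_parts_ofBetaSet_le (N : ℕ) (S : Finset ℕ) : (ofBetaSet N S).2.parts.card ≤ N :=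
  (card_parts_ofMultiset_le _).trans_eq (by simp)

/-! ### Splitting a set of naturals by residues -/

theorem mul_add_eq_mul_add_iff {t q q' r r' : ℕ} (hr : r < t) (hr' : r' < t) :
    t * q + r = t * q' + r' ↔ q = q' ∧ r = r' := by
  refine ⟨fun h => ?_, fun ⟨hq, hr⟩ => hq ▸ hr ▸ rfl⟩
  have hpos : 0 < t := by omega
  have hq := congrArg (· / t) h
  simp only [Nat.mul_add_div hpos, Nat.div_eq_of_lt hr, Nat.div_eq_of_lt hr', add_zero] at hq
  subst hq
  omega

theorem mul_add_injective (t : ℕ) :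
    Function.Injective fun p : Σ _ : Fin t, ℕ => t * p.2 + p.1 := by
  rintro ⟨r, q⟩ ⟨r', q'⟩ h
  obtain ⟨rfl, hr⟩ := (mul_add_eq_mul_add_iff r.2 r'.2).1 h
  obtain rfl := Fin.ext hr
  rfl

def residueMerge (t : ℕ) (V : Fin t → Finset ℕ) : Finset ℕ :=
  (univ.sigma V).map ⟨_, mul_add_injective t⟩

noncomputable def residueSplit (t : ℕ) (S : Finset ℕ) (r : Fin t) : Finset ℕ :=
  S.preimage (fun q => t * q + r) fun _ _ _ _ h => ((mul_add_eq_mul_add_iff r.2 r.2).1 h).1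

theorem mem_residueMerge {t : ℕ} {V : Fin t → Finset ℕ} {x : ℕ} :
    x ∈ residueMerge t V ↔ ∃ r : Fin t, ∃ q ∈ V r, t * q + r = x := by
  simp [residueMerge]

theorem mem_residueSplit {t : ℕ} {S : Finset ℕ} {r : Fin t} {q : ℕ} :
    q ∈ residueSplit t S r ↔ t * q + r ∈ S :=
  mem_preimage

theorem residueSplit_residueMerge (t : ℕ) (V : Fin t → Finset ℕ) :
    residueSplit t (residueMerge t V) = V := by
  ext r q
  rw [mem_residueSplit, mem_residueMerge]
  constructor
  · rintro ⟨r', q', hq', h⟩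
    obtain ⟨rfl, hr⟩ := (mul_add_eq_mul_add_iff r'.2 r.2).1 h
    rwa [← Fin.ext hr]
  · exact fun hq => ⟨r, q, hq, rfl⟩

theorem residueMerge_residueSplit {t : ℕ} (ht : t ≠ 0) (S : Finset ℕ) :
    residueMerge t (residueSplit t S) = S := by
  ext x
  simp only [mem_residueMerge, mem_residueSplit]
  constructor
  · rintro ⟨r, q, hq, rfl⟩
    exact hq
  · intro hx
    exact ⟨⟨x % t, Nat.mod_lt x (Nat.pos_of_ne_zero ht)⟩, x / t, by rwa [Nat.div_add_mod],
      Nat.div_add_mod x t⟩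

theorem card_residueMerge (t : ℕ) (V : Fin t → Finset ℕ) :
    (residueMerge t V).card = ∑ r, (V r).card := by
  rw [residueMerge, card_map, card_sigma]

theorem sum_residueMerge (t : ℕ) (V : Fin t → Finset ℕ) :
    ∑ x ∈ residueMerge t V, x = ∑ r, (t * ∑ q ∈ V r, q + r * (V r).card) := by
  rw [residueMerge, sum_map, sum_sigma]
  refine sum_congr rfl fun r _ => ?_
  simp [sum_add_distrib, mul_sum, mul_comm]

/-! ### The theta exponent -/

/-- The exponent `t ‖c‖²/2 + b·c` of `z^{1/t}`; the integer division is exact when `∑ c = 0`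
(`two_dvd_sum_sq`). -/
def thetaExponent (t : ℕ) (c : Fin t → ℤ) : ℤ :=
  t * ((∑ i, c i ^ 2) / 2) + ∑ i : Fin t, ((i : ℕ) : ℤ) * c i

section

variable {t : ℕ} {c : Fin t → ℤ}

theorem two_dvd_sum_sq (hc : ∑ i, c i = 0) : 2 ∣ ∑ i, c i ^ 2 := by
  have h : ∑ i, c i ^ 2 = ∑ i, c i * (c i - 1) + ∑ i, c i := by
    rw [← sum_add_distrib]
    exact sum_congr rfl fun i _ => by ring
  rw [h, hc, add_zero, ← even_iff_two_dvd]
  exact even_sum _ fun i _ => Int.even_mul_pred_self (c i)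

theorem two_mul_thetaExponent (hc : ∑ i, c i = 0) :
    2 * thetaExponent t c = t * ∑ i, c i ^ 2 + 2 * ∑ i : Fin t, ((i : ℕ) : ℤ) * c i := by
  obtain ⟨k, hk⟩ := two_dvd_sum_sq hc
  rw [thetaExponent, hk, Int.mul_ediv_cancel_left _ two_ne_zero]
  ring

theorem sum_abs_le_two_mul_thetaExponent (hc : ∑ i, c i = 0) :
    ∑ i, |c i| ≤ 2 * thetaExponent t c := by
  -- adding `(1 - t) ∑ c = 0` makes each summand at least `|c i|`, as `|2 i - t + 1| < t`
  have h : 2 * thetaExponent t c = ∑ i : Fin t, (t * c i ^ 2 + (2 * (i : ℕ) - t + 1) * c i) := by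
    rw [two_mul_thetaExponent hc]
    have : ∑ i : Fin t, (t * c i ^ 2 + (2 * (i : ℕ) - t + 1) * c i) =
        t * ∑ i, c i ^ 2 + 2 * ∑ i : Fin t, ((i : ℕ) : ℤ) * c i + (1 - t) * ∑ i, c i := by
      simp only [mul_sum, ← sum_add_distrib]
      exact sum_congr rfl fun i _ => by ring
    rw [this, hc]
    ring
  rw [h]
  refine sum_le_sum fun i _ => ?_
  have hi : ((i : ℕ) : ℤ) + 1 ≤ t := by exact_mod_cast i.2
  have hi₀ : (0 : ℤ) ≤ (i : ℕ) := Int.natCast_nonneg _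
  have ht : (0 : ℤ) ≤ t := by omega
  rcases lt_trichotomy (c i) 0 with hci | hci | hci
  · rw [abs_of_neg hci]
    nlinarith [mul_nonneg (neg_nonneg.2 hci.le) (mul_nonneg ht (by omega : 0 ≤ -c i - 1))]
  · simp [hci]
  · rw [abs_of_pos hci]
    nlinarith [mul_nonneg hci.le (mul_nonneg ht (by omega : 0 ≤ c i - 1))]

theorem thetaExponent_nonneg (hc : ∑ i, c i = 0) : 0 ≤ thetaExponent t c := by
  have := sum_abs_le_two_mul_thetaExponent hc
  have : 0 ≤ ∑ i, |c i| := sum_nonneg fun i _ => abs_nonneg (c i)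
  omega

theorem abs_le_two_mul_thetaExponent (hc : ∑ i, c i = 0) (r : Fin t) :
    |c r| ≤ 2 * thetaExponent t c :=
  (single_le_sum (fun i _ => abs_nonneg (c i)) (mem_univ r)).trans
    (sum_abs_le_two_mul_thetaExponent hc)

theorem thetaExponent_add_mul_emod (c : Fin t → ℤ) (k : ℤ) :
    (thetaExponent t c + t * k) % t = (∑ i : Fin t, ((i : ℕ) : ℤ) * c i) % t := by
  rw [thetaExponent, add_right_comm, ← mul_add, Int.mul_add_emod_self_left]

theorem two_mul_sum_range_id (n : ℕ) : 2 * ((∑ j ∈ range n, j : ℕ) : ℤ) = n * (n - 1) := by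
  induction n with
  | zero => simp
  | succ n ih =>
    rw [sum_range_succ]
    push_cast at ih ⊢
    linear_combination ih

-- The left side sums the set whose residue-`r` elements are `t j + r` for `j < s + c r`; it exceeds
-- the sum of `{0, …, t s - 1}` exactly by the theta exponent.
theorem sum_residue_triangles (s : ℕ) (m : Fin t → ℕ) (hm : ∀ r, (m r : ℤ) = s + c r)
    (hc : ∑ i, c i = 0) :
    ((∑ r : Fin t, (t * ∑ j ∈ range (m r), j + r * m r) : ℕ) : ℤ) =
      ((∑ j ∈ range (t * s), j : ℕ) : ℤ) + thetaExponent t c := by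
  push_cast
  refine mul_left_cancel₀ (two_ne_zero' ℤ) ?_
  have hrange : 2 * ∑ r : Fin t, ((r : ℕ) : ℤ) = t * (t - 1) := by
    rw [Fin.sum_univ_eq_sum_range (fun r => (r : ℤ)), ← two_mul_sum_range_id, Nat.cast_sum]
  have hexpand : 2 * ∑ r : Fin t, ((t : ℤ) * ∑ j ∈ range (m r), (j : ℤ) + (r : ℕ) * m r) =
      ∑ r : Fin t, (t * (s ^ 2 - s) + t * (2 * s - 1) * c r + t * c r ^ 2 +
        2 * s * (r : ℕ) + 2 * ((r : ℕ) * c r)) := by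
    rw [mul_sum]
    refine sum_congr rfl fun r _ => ?_
    rw [mul_add, ← mul_assoc, mul_comm 2 (t : ℤ), mul_assoc, ← Nat.cast_sum,
      two_mul_sum_range_id, hm]
    ring
  rw [hexpand, mul_add, ← Nat.cast_sum, two_mul_sum_range_id, two_mul_thetaExponent hc]
  simp only [sum_add_distrib, ← mul_sum, sum_const, card_univ, Fintype.card_fin, nsmul_eq_mul, hc]
  push_cast
  linear_combination (s : ℤ) * hrange

end

section

variable {t s : ℕ}

/-! ### The `t`-quotient -/

noncomputable def residueBetaSet (t s : ℕ) (q : Partitions) : Fin t → Finset ℕ :=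
  residueSplit t (betaSet (t * s) q)

noncomputable def quotientCharge (t s : ℕ) (q : Partitions) (r : Fin t) : ℤ :=
  (residueBetaSet t s q r).card - s

noncomputable def quotientPart (t s : ℕ) (q : Partitions) (r : Fin t) : Partitions :=
  ofBetaSet (residueBetaSet t s q r).card (residueBetaSet t s q r)

def ofQuotient (t s : ℕ) (c : Fin t → ℤ) (μ : Fin t → Partitions) : Partitions :=
  ofBetaSet (t * s) (residueMerge t fun r => betaSet (s + c r).toNat (μ r))

theorem sum_card_residueBetaSet (ht : t ≠ 0) (q : Partitions) :
    ∑ r, (residueBetaSet t s q r).card = t * s := by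
  rw [← card_residueMerge, residueBetaSet, residueMerge_residueSplit ht, card_betaSet]

theorem sum_quotientCharge (ht : t ≠ 0) (q : Partitions) : ∑ r, quotientCharge t s q r = 0 := by
  have h : ∑ r, ((residueBetaSet t s q r).card : ℤ) = t * s := by
    exact_mod_cast sum_card_residueBetaSet ht q
  simp only [quotientCharge, sum_sub_distrib, h, sum_const, card_univ, Fintype.card_fin,
    nsmul_eq_mul, sub_self]

theorem card_parts_quotientPart_le (q : Partitions) (r : Fin t) :
    ((quotientPart t s q r).2.parts.card : ℤ) ≤ s + quotientCharge t s q r := by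
  rw [quotientCharge, add_sub_cancel]
  exact_mod_cast card_parts_ofBetaSet_le _ _

theorem ofQuotient_quotient (ht : t ≠ 0) {q : Partitions} (hq : q.2.parts.card ≤ t * s) :
    ofQuotient t s (quotientCharge t s q) (quotientPart t s q) = q := by
  have hV : ∀ r, betaSet (s + quotientCharge t s q r).toNat (quotientPart t s q r) =
      residueBetaSet t s q r := fun r => by
    rw [quotientCharge, add_sub_cancel, Int.toNat_natCast, quotientPart, betaSet_ofBetaSet rfl]
  rw [ofQuotient, funext hV, residueBetaSet, residueMerge_residueSplit ht, ofBetaSet_betaSet hq]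

section
variable {c : Fin t → ℤ} {μ : Fin t → Partitions}

theorem card_residueMerge_betaSet (hc : ∑ r, c r = 0)
    (hμ : ∀ r, ((μ r).2.parts.card : ℤ) ≤ s + c r) :
    (residueMerge t fun r => betaSet (s + c r).toNat (μ r)).card = t * s := by
  simp only [card_residueMerge, card_betaSet]
  zify
  simp only [Int.toNat_of_nonneg ((Int.natCast_nonneg _).trans (hμ _)), sum_add_distrib, hc,
    sum_const, card_univ, Fintype.card_fin, nsmul_eq_mul, add_zero]

theorem residueBetaSet_ofQuotient (hc : ∑ r, c r = 0)
    (hμ : ∀ r, ((μ r).2.parts.card : ℤ) ≤ s + c r) :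
    residueBetaSet t s (ofQuotient t s c μ) = fun r => betaSet (s + c r).toNat (μ r) := by
  rw [residueBetaSet, ofQuotient, betaSet_ofBetaSet (card_residueMerge_betaSet hc hμ),
    residueSplit_residueMerge]

theorem quotientCharge_ofQuotient (hc : ∑ r, c r = 0)
    (hμ : ∀ r, ((μ r).2.parts.card : ℤ) ≤ s + c r) :
    quotientCharge t s (ofQuotient t s c μ) = c := by
  funext r
  rw [quotientCharge, residueBetaSet_ofQuotient hc hμ, card_betaSet,
    Int.toNat_of_nonneg ((Int.natCast_nonneg _).trans (hμ r)), add_sub_cancel_left]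

theorem quotientPart_ofQuotient (hc : ∑ r, c r = 0)
    (hμ : ∀ r, ((μ r).2.parts.card : ℤ) ≤ s + c r) :
    quotientPart t s (ofQuotient t s c μ) = μ := by
  funext r
  rw [quotientPart, residueBetaSet_ofQuotient hc hμ, card_betaSet,
    ofBetaSet_betaSet (by have := hμ r; omega)]

theorem size_ofQuotient (hc : ∑ r, c r = 0) (hμ : ∀ r, ((μ r).2.parts.card : ℤ) ≤ s + c r) :
    ((ofQuotient t s c μ).1 : ℤ) = thetaExponent t c + t * ∑ r, ((μ r).1 : ℤ) := by
  have hm : ∀ r, ((s + c r).toNat : ℤ) = s + c r := fun r =>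
    Int.toNat_of_nonneg ((Int.natCast_nonneg _).trans (hμ r))
  have hbeta : ∀ r, ∑ x ∈ betaSet (s + c r).toNat (μ r), x =
      (μ r).1 + ∑ j ∈ range (s + c r).toNat, j :=
    fun r => sum_betaSet (by have := hμ r; have := hm r; omega)
  have hsum : ∑ x ∈ betaSet (t * s) (ofQuotient t s c μ), x =
      (ofQuotient t s c μ).1 + ∑ j ∈ range (t * s), j :=
    sum_betaSet (card_parts_ofBetaSet_le _ _)
  rw [ofQuotient, betaSet_ofBetaSet (card_residueMerge_betaSet hc hμ), sum_residueMerge] at hsum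
  have hN : (ofQuotient t s c μ).1 + ∑ j ∈ range (t * s), j = t * ∑ r, (μ r).1 +
      ∑ r : Fin t, (t * ∑ j ∈ range (s + c r).toNat, j + r * (s + c r).toNat) := by
    rw [ofQuotient, ← hsum, mul_sum, ← sum_add_distrib]
    exact sum_congr rfl fun r _ => by rw [hbeta, card_betaSet]; ring
  have hZ := congrArg (Nat.cast : ℕ → ℤ) hN
  rw [Nat.cast_add, Nat.cast_add, sum_residue_triangles s _ hm hc] at hZ
  push_cast at hZ
  linarith

end

theorem size_eq_of_quotient (ht : t ≠ 0) {q : Partitions} (hq : q.2.parts.card ≤ t * s) :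
    (q.1 : ℤ) =
      thetaExponent t (quotientCharge t s q) + t * ∑ r, ((quotientPart t s q r).1 : ℤ) := by
  conv_lhs => rw [← ofQuotient_quotient ht hq]
  exact size_ofQuotient (sum_quotientCharge ht q) (card_parts_quotientPart_le q)

end

abbrev ChargeLattice (t l : ℕ) :=
  {m : Fin t → ℤ // (∑ i, m i) = 0 ∧ (∑ i : Fin t, ((i : ℕ) : ℤ) * m i) % t = (l : ℤ)}

section

variable {t : ℕ}

theorem card_parts_le_mul_three_mul (ht : t ≠ 0) (q : Partitions) :
    q.2.parts.card ≤ t * (3 * q.1) :=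
  (card_parts_le_size q).trans <| by nlinarith [Nat.pos_of_ne_zero ht]

def quotientSize (t : ℕ) (c : Fin t → ℤ) (μ : Fin t → Partitions) : ℕ :=
  (thetaExponent t c + t * ∑ r, ((μ r).1 : ℤ)).toNat

theorem quotientSize_eq {c : Fin t → ℤ} (hc : ∑ r, c r = 0) (μ : Fin t → Partitions) :
    (quotientSize t c μ : ℤ) = thetaExponent t c + t * ∑ r, ((μ r).1 : ℤ) :=
  Int.toNat_of_nonneg (add_nonneg (thetaExponent_nonneg hc) (by positivity))

theorem card_parts_le_three_mul_quotientSize {c : Fin t → ℤ} (hc : ∑ r, c r = 0)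
    (μ : Fin t → Partitions) (r : Fin t) :
    ((μ r).2.parts.card : ℤ) ≤ ↑(3 * quotientSize t c μ) + c r := by
  have hn := quotientSize_eq hc μ
  have hcr := abs_le.1 (abs_le_two_mul_thetaExponent hc r)
  have hμr : ((μ r).1 : ℤ) ≤ ∑ r, ((μ r).1 : ℤ) :=
    single_le_sum (fun i _ => Int.natCast_nonneg _) (mem_univ r)
  have ht : (1 : ℤ) ≤ t := by exact_mod_cast r.pos
  have := card_parts_le_size (μ r)
  have := thetaExponent_nonneg hc
  push_cast
  nlinarith

theorem quotientSize_quotient (ht : t ≠ 0) (q : Partitions) :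
    quotientSize t (quotientCharge t (3 * q.1) q) (quotientPart t (3 * q.1) q) = q.1 := by
  rw [quotientSize, ← size_eq_of_quotient ht (card_parts_le_mul_three_mul ht q),
    Int.toNat_natCast]

theorem size_ofQuotient_three_mul {c : Fin t → ℤ} (hc : ∑ r, c r = 0) (μ : Fin t → Partitions) :
    (ofQuotient t (3 * quotientSize t c μ) c μ).1 = quotientSize t c μ := by
  have := size_ofQuotient hc (card_parts_le_three_mul_quotientSize hc μ)
  rw [← quotientSize_eq hc] at this
  exact_mod_cast this

theorem natCast_size_emod {n : ℕ} {c : Fin t → ℤ} {k : ℤ}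
    (h : (n : ℤ) = thetaExponent t c + t * k) :
    ((n % t : ℕ) : ℤ) = (∑ i : Fin t, ((i : ℕ) : ℤ) * c i) % t := by
  rw [Int.natCast_mod, h, thetaExponent_add_mul_emod]

/-- The charge `s` must allow `t s` parts for `λ` and `s + c r` parts for each `μ r`. Since
`|c r| ≤ 2 |λ|`, `s = 3 |λ|` works, and it can be computed from either side of the bijection. -/
noncomputable def quotientEquiv (ht : t ≠ 0) (l : ℕ) :
    {q : Partitions // q.1 % t = l} ≃ ChargeLattice t l × (Fin t → Partitions) where
  toFun q := (⟨quotientCharge t (3 * q.1.1) q.1, sum_quotientCharge ht q.1, by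
      rw [← natCast_size_emod (size_eq_of_quotient ht (card_parts_le_mul_three_mul ht q.1)),
        q.2]⟩,
    quotientPart t (3 * q.1.1) q.1)
  invFun p := ⟨ofQuotient t (3 * quotientSize t p.1.1 p.2) p.1.1 p.2, by
      have h := natCast_size_emod (n := (ofQuotient t (3 * quotientSize t p.1.1 p.2) p.1.1 p.2).1)
        (by rw [size_ofQuotient_three_mul p.1.2.1]; exact quotientSize_eq p.1.2.1 p.2)
      exact_mod_cast h.trans p.1.2.2⟩
  left_inv q := by
    ext1
    simp only [quotientSize_quotient ht]
    exact ofQuotient_quotient ht (card_parts_le_mul_three_mul ht q.1)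
  right_inv p := by
    obtain ⟨⟨c, hc, -⟩, μ⟩ := p
    simp only [size_ofQuotient_three_mul hc]
    ext1
    · exact Subtype.ext (quotientCharge_ofQuotient hc (card_parts_le_three_mul_quotientSize hc μ))
    · exact quotientPart_ofQuotient hc (card_parts_le_three_mul_quotientSize hc μ)

theorem size_quotientEquiv_symm (ht : t ≠ 0) {l : ℕ}
    (p : ChargeLattice t l × (Fin t → Partitions)) :
    ((quotientEquiv ht l).symm p).1.1 = (thetaExponent t p.1.1).toNat + t * ∑ r, (p.2 r).1 := by
  change (ofQuotient t (3 * quotientSize t p.1.1 p.2) p.1.1 p.2).1 = _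
  zify
  rw [size_ofQuotient_three_mul p.1.2.1, quotientSize_eq p.1.2.1,
    Int.toNat_of_nonneg (thetaExponent_nonneg p.1.2.1)]

end

/-! ### Generating functions -/

def ofMultiplicities (N : ℕ) (v : Fin N → ℕ) : Partitions :=
  ofMultiset (∑ k, Multiset.replicate (v k) ((k : ℕ) + 1))

theorem parts_ofMultiplicities (N : ℕ) (v : Fin N → ℕ) :
    (ofMultiplicities N v).2.parts = ∑ k, Multiset.replicate (v k) ((k : ℕ) + 1) := by
  refine Multiset.filter_eq_self.2 fun a ha => ?_
  obtain ⟨k, -, hk⟩ := Multiset.mem_sum.1 ha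
  rw [Multiset.eq_of_mem_replicate hk]
  exact k.val.succ_pos

theorem size_ofMultiplicities (N : ℕ) (v : Fin N → ℕ) :
    (ofMultiplicities N v).1 = ∑ k : Fin N, ((k : ℕ) + 1) * v k := by
  rw [← (ofMultiplicities N v).2.parts_sum, parts_ofMultiplicities]
  simp [Multiset.sum_sum, mul_comm]

theorem count_ofMultiplicities (N : ℕ) (v : Fin N → ℕ) (k : Fin N) :
    (ofMultiplicities N v).2.parts.count ((k : ℕ) + 1) = v k := by
  rw [parts_ofMultiplicities, Multiset.count_sum']
  simp [Multiset.count_replicate, Fin.val_inj]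

theorem count_ofMultiplicities_eq_zero (N : ℕ) (v : Fin N → ℕ) {a : ℕ}
    (ha : ∀ k : Fin N, (k : ℕ) + 1 ≠ a) : (ofMultiplicities N v).2.parts.count a = 0 := by
  rw [parts_ofMultiplicities, Multiset.count_sum']
  simp [Multiset.count_replicate, ha]

def boundedPartsEquiv (N : ℕ) : (Fin N → ℕ) ≃ {q : Partitions // ∀ i ∈ q.2.parts, i ≤ N} where
  toFun v := ⟨ofMultiplicities N v, fun i hi => by
    rw [parts_ofMultiplicities] at hi
    obtain ⟨k, -, hk⟩ := Multiset.mem_sum.1 hi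
    rw [Multiset.eq_of_mem_replicate hk]
    exact k.2⟩
  invFun q k := q.1.2.parts.count ((k : ℕ) + 1)
  left_inv v := funext (count_ofMultiplicities N v)
  right_inv q := by
    refine Subtype.ext (ext_parts (Multiset.ext.2 fun a => ?_))
    by_cases ha : ∃ k : Fin N, (k : ℕ) + 1 = a
    · obtain ⟨k, rfl⟩ := ha
      exact count_ofMultiplicities N _ k
    · simp only [not_exists] at ha
      rw [count_ofMultiplicities_eq_zero N _ ha, eq_comm, Multiset.count_eq_zero]
      intro hmem
      have hpos := q.1.2.parts_pos hmem
      exact ha ⟨a - 1, by have := q.2 a hmem; omega⟩ (show a - 1 + 1 = a by omega)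

theorem inv_one_sub_le_exp {r x : ℝ} (hx : 0 ≤ x) (hxr : x ≤ r) (hr : r < 1) :
    (1 - x)⁻¹ ≤ Real.exp (x / (1 - r)) := by
  have h1 : 0 < 1 - x := by linarith
  have h2 : 0 < 1 - r := by linarith
  calc (1 - x)⁻¹ = x / (1 - x) + 1 := by field_simp; ring
    _ ≤ x / (1 - r) + 1 := by gcongr
    _ ≤ Real.exp (x / (1 - r)) := Real.add_one_le_exp _

theorem prod_inv_one_sub_pow_le {r : ℝ} (hr₀ : 0 ≤ r) (hr : r < 1) (N : ℕ) :
    ∏ k ∈ range N, (1 - r ^ (k + 1))⁻¹ ≤ Real.exp (∑' k : ℕ, r ^ (k + 1) / (1 - r)) := by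
  have hsum : Summable fun k : ℕ => r ^ (k + 1) / (1 - r) :=
    ((summable_nat_add_iff 1).2 (summable_geometric_of_lt_one hr₀ hr)).div_const _
  calc ∏ k ∈ range N, (1 - r ^ (k + 1))⁻¹ ≤ ∏ k ∈ range N, Real.exp (r ^ (k + 1) / (1 - r)) :=
        prod_le_prod (fun k _ => inv_nonneg.2 (sub_nonneg.2 (pow_le_one₀ hr₀ hr.le)))
          fun k _ =>
            inv_one_sub_le_exp (by positivity) (pow_le_of_le_one hr₀ hr.le k.succ_ne_zero) hr
    _ = Real.exp (∑ k ∈ range N, r ^ (k + 1) / (1 - r)) := (Real.exp_sum _ _).symm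
    _ ≤ Real.exp (∑' k : ℕ, r ^ (k + 1) / (1 - r)) :=
        Real.exp_le_exp.2 (hsum.sum_le_tsum _ fun k _ => div_nonneg (by positivity) (by linarith))

section

open Filter Topology

variable {𝕜 : Type*} [NormedField 𝕜]

theorem summable_norm_prod_pi {n : ℕ} {κ : Type*} {f : Fin n → κ → 𝕜}
    (hf : ∀ k, Summable fun x => ‖f k x‖) :
    Summable fun v : Fin n → κ => ‖∏ k, f k (v k)‖ := by
  induction n with
  | zero => exact .of_finite
  | succ n ih =>
    rw [← (Fin.consEquiv fun _ => κ).summable_iff]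
    simpa [Function.comp_def, Fin.prod_univ_succ] using (hf 0).mul_norm (ih fun k => hf k.succ)

theorem tsum_prod_pi [CompleteSpace 𝕜] {n : ℕ} {κ : Type*} {f : Fin n → κ → 𝕜}
    (hf : ∀ k, Summable fun x => ‖f k x‖) :
    ∑' v : Fin n → κ, ∏ k, f k (v k) = ∏ k, ∑' x, f k x := by
  induction n with
  | zero => simp
  | succ n ih =>
    rw [← (Fin.consEquiv fun _ => κ).tsum_eq, Fin.prod_univ_succ, ← ih fun k => hf k.succ,
      tsum_mul_tsum_of_summable_norm (hf 0) (summable_norm_prod_pi fun k => hf k.succ)]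
    simp [Fin.prod_univ_succ]

theorem hasSum_pow_size_of_parts_le [CompleteSpace 𝕜] {z : 𝕜} (hz : ‖z‖ < 1) (N : ℕ) :
    HasSum (fun q : {q : Partitions // ∀ i ∈ q.2.parts, i ≤ N} => z ^ q.1.1)
      (∏ k ∈ range N, (1 - z ^ (k + 1))⁻¹) := by
  have hgeom : ∀ k : Fin N, Summable fun x => ‖(z ^ ((k : ℕ) + 1)) ^ x‖ := fun k =>
    summable_norm_geometric_of_norm_lt_one
      (by rw [norm_pow]; exact pow_lt_one₀ (norm_nonneg z) hz k.val.succ_ne_zero)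
  have hterm : (fun q : {q : Partitions // ∀ i ∈ q.2.parts, i ≤ N} => z ^ q.1.1) ∘
      boundedPartsEquiv N = fun v => ∏ k : Fin N, (z ^ ((k : ℕ) + 1)) ^ v k := by
    funext v
    simp only [Function.comp_apply, boundedPartsEquiv, Equiv.coe_fn_mk, size_ofMultiplicities,
      ← prod_pow_eq_pow_sum, pow_mul]
  have hprod : ∏ k ∈ range N, (1 - z ^ (k + 1))⁻¹ =
      ∑' v : Fin N → ℕ, ∏ k : Fin N, (z ^ ((k : ℕ) + 1)) ^ v k := by
    rw [tsum_prod_pi hgeom, ← Fin.prod_univ_eq_prod_range (fun k => (1 - z ^ (k + 1))⁻¹)]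
    exact prod_congr rfl fun k _ => (tsum_geometric_of_norm_lt_one
      (by rw [norm_pow]; exact pow_lt_one₀ (norm_nonneg z) hz k.val.succ_ne_zero)).symm
  rw [← (boundedPartsEquiv N).hasSum_iff, hterm, hprod]
  exact (summable_norm_prod_pi hgeom).of_norm.hasSum

theorem summable_pow_size {r : ℝ} (hr₀ : 0 ≤ r) (hr : r < 1) :
    Summable fun q : Partitions => r ^ q.1 := by
  classical
  refine summable_of_sum_le (c := Real.exp (∑' k : ℕ, r ^ (k + 1) / (1 - r)))
    (fun q => pow_nonneg hr₀ _) fun u => ?_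
  set N := u.sup (·.1)
  have hu : ∀ q ∈ u, ∀ i ∈ q.2.parts, i ≤ N := fun q hq i hi =>
    (Nat.Partition.le_of_mem_parts hi).trans (le_sup (f := (·.1)) hq)
  rw [← sum_subtype_of_mem (fun q : Partitions => r ^ q.1) hu]
  exact (sum_le_hasSum _ (fun q _ => pow_nonneg hr₀ _) (hasSum_pow_size_of_parts_le
    (by rwa [Real.norm_of_nonneg hr₀]) N)).trans (prod_inv_one_sub_pow_le hr₀ hr N)

theorem summable_norm_pow_size {z : 𝕜} (hz : ‖z‖ < 1) :
    Summable fun q : Partitions => ‖z ^ q.1‖ := by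
  simpa [norm_pow] using summable_pow_size (norm_nonneg z) hz

theorem tprod_one_sub_pow_mul_tsum_pow_size [CompleteSpace 𝕜] {z : 𝕜} (hz : ‖z‖ < 1) :
    (∏' k : ℕ, (1 - z ^ (k + 1))) * ∑' q : Partitions, z ^ q.1 = 1 := by
  have hz' : ∀ k : ℕ, ‖z ^ (k + 1)‖ < 1 := fun k => by
    rw [norm_pow]; exact pow_lt_one₀ (norm_nonneg z) hz k.succ_ne_zero
  have hprod : Tendsto (fun N => ∏ k ∈ range N, (1 - z ^ (k + 1))) atTop
      (𝓝 (∏' k : ℕ, (1 - z ^ (k + 1)))) := by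
    have hsum : Summable fun k : ℕ => ‖-z ^ (k + 1)‖ := by
      simpa using (summable_nat_add_iff 1).2 (summable_norm_geometric_of_norm_lt_one hz)
    simpa [sub_eq_add_neg] using (multipliable_one_add_of_summable hsum).hasProd.tendsto_prod_nat
  have hinv : Tendsto (fun N => ∏ k ∈ range N, (1 - z ^ (k + 1))⁻¹) atTop
      (𝓝 (∑' q : Partitions, z ^ q.1)) := by
    have hind : ∀ N, ∏ k ∈ range N, (1 - z ^ (k + 1))⁻¹ = ∑' q : Partitions,
        Set.indicator {q : Partitions | ∀ i ∈ q.2.parts, i ≤ N} (fun q => z ^ q.1) q :=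
      fun N => by
      rw [← _root_.tsum_subtype]
      exact (hasSum_pow_size_of_parts_le hz N).tsum_eq.symm
    refine Tendsto.congr (fun N => (hind N).symm) ?_
    refine tendsto_tsum_of_dominated_convergence (summable_norm_pow_size hz) (fun q => ?_)
      (Eventually.of_forall fun N q => norm_indicator_le_norm_self _ _)
    refine tendsto_const_nhds.congr' (eventually_atTop.2 ⟨q.1, fun N hN => ?_⟩)
    exact (Set.indicator_of_mem (s := {q : Partitions | ∀ i ∈ q.2.parts, i ≤ N})
      (fun i hi => (Nat.Partition.le_of_mem_parts hi).trans hN) fun q => z ^ q.1).symm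
  refine tendsto_nhds_unique (hprod.mul hinv) (tendsto_const_nhds.congr fun N => ?_)
  rw [← prod_mul_distrib]
  refine (prod_eq_one fun k _ => mul_inv_cancel₀ ?_).symm
  exact sub_ne_zero.2 fun h => (hz' k).ne (by rw [← h, norm_one])

theorem tsum_size_eq_tsum_card_mul [CompleteSpace 𝕜] {f : ℕ → 𝕜}
    (hf : Summable fun q : Partitions => f q.1) :
    ∑' q : Partitions, f q.1 = ∑' n, (Fintype.card (Nat.Partition n) : 𝕜) * f n := by
  rw [hf.tsum_sigma]
  simp [tsum_fintype]

theorem tsum_pow_size_subtype [CompleteSpace 𝕜] (P : ℕ → Prop) [DecidablePred P] {y : 𝕜}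
    (hy : ‖y‖ < 1) :
    ∑' q : {q : Partitions // P q.1}, y ^ q.1.1 =
      ∑' n, (if P n then (Fintype.card (Nat.Partition n) : 𝕜) else 0) * y ^ n := by
  have hind : ∀ q : Partitions, Set.indicator {q : Partitions | P q.1} (fun q => y ^ q.1) q =
      if P q.1 then y ^ q.1 else 0 := fun q => Set.indicator_apply _ _ _
  have hsum : Summable fun q : Partitions => if P q.1 then y ^ q.1 else 0 :=
    .of_norm_bounded (summable_norm_pow_size hy) fun q => by split_ifs <;> simp
  refine (_root_.tsum_subtype {q : Partitions | P q.1} (fun q => y ^ q.1)).trans ?_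
  rw [tsum_congr hind,
    tsum_size_eq_tsum_card_mul (f := fun n => if P n then y ^ n else 0) hsum]
  exact tsum_congr fun n => by split_ifs <;> simp

theorem tsum_pow_size_mod_eq [CompleteSpace 𝕜] {t : ℕ} (ht : t ≠ 0) (l : ℕ) {y : 𝕜}
    (hy : ‖y‖ < 1) :
    ∑' q : {q : Partitions // q.1 % t = l}, y ^ q.1.1 =
      (∑' c : ChargeLattice t l, y ^ (thetaExponent t c.1).toNat) *
        (∑' q : Partitions, (y ^ t) ^ q.1) ^ t := by
  have hyt : ‖y ^ t‖ < 1 := by rw [norm_pow]; exact pow_lt_one₀ (norm_nonneg y) hy ht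
  have hlattice : Summable fun c : ChargeLattice t l => ‖y ^ (thetaExponent t c.1).toNat‖ := by
    let empty : Fin t → Partitions := fun _ => ⟨0, default⟩
    have hinj : Function.Injective fun c : ChargeLattice t l =>
        (quotientEquiv ht l).symm (c, empty) :=
      (quotientEquiv ht l).symm.injective.comp fun _ _ h => congrArg Prod.fst h
    refine (((summable_norm_pow_size hy).subtype _).comp_injective hinj).congr fun c => ?_
    simp [size_quotientEquiv_symm, empty]
  have hparts := summable_norm_prod_pi fun _ : Fin t => summable_norm_pow_size hyt
  rw [← Fin.prod_const t (∑' q : Partitions, (y ^ t) ^ q.1),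
    ← tsum_prod_pi fun _ => summable_norm_pow_size hyt,
    tsum_mul_tsum_of_summable_norm hlattice hparts, ← (quotientEquiv ht l).symm.tsum_eq]
  refine tsum_congr fun p => ?_
  rw [size_quotientEquiv_symm, pow_add, pow_mul, prod_pow_eq_pow_sum]

end

end ThetaPartition

open ThetaPartition

theorem theta_lattice_eq_partition_sum_general (t : ℕ) (ht : 1 ≤ t) (l : ℕ)
    (z y : ℂ) (hz : ‖z‖ < 1) (hy : y ^ t = z) :
    (∑' m : {m : Fin t → ℤ // (∑ i, m i) = 0 ∧ (∑ i : Fin t, ((i : ℕ) : ℤ) * m i) % t = (l : ℤ)},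
        y ^ ((t : ℤ) * ((∑ i, (m.1 i) ^ 2) / 2) + ∑ i : Fin t, ((i : ℕ) : ℤ) * m.1 i)) =
      (∏' k : ℕ, (1 - z ^ (k + 1))) ^ t *
        ∑' m : ℕ, (if m % t = l then (Fintype.card (Nat.Partition m) : ℂ) else 0) * y ^ m := by
  have ht₀ : t ≠ 0 := by omega
  have hy₁ : ‖y‖ < 1 := (pow_lt_one_iff_of_nonneg (norm_nonneg y) ht₀).1 (by rwa [← norm_pow, hy])
  have hlhs : ∀ c : ChargeLattice t l,
      y ^ thetaExponent t c.1 = y ^ (thetaExponent t c.1).toNat :=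
    fun c => by rw [← zpow_natCast, Int.toNat_of_nonneg (thetaExponent_nonneg c.2.1)]
  rw [← tsum_pow_size_subtype _ hy₁, tsum_pow_size_mod_eq ht₀ l hy₁, hy, mul_left_comm,
    ← mul_pow, tprod_one_sub_pow_mul_tsum_pow_size hz, one_pow, mul_one]
  exact tsum_congr hlhs

/-- For `|z| < 1`, `t ≥ 1`, `0 ≤ ℓ < t`, and a fixed `t`-th root `y` of `z`
(so that `z^{m/t} = y^m`), the theta function
`Θ_{ℓ,t}(z) = ∑_{m ∈ ℤ^t, 1·m = 0, b·m ≡ ℓ (t)} z^{‖m‖²/2 + b·m/t}` with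
`b = (0,1,…,t-1)` satisfies
`Θ_{ℓ,t}(z) = (z;z)_∞^t · ∑_{m ≥ 0, m ≡ ℓ (t)} p(m) z^{m/t}`. -/
theorem theta_lattice_eq_partition_sum (t : ℕ) (ht : 1 ≤ t) (l : ℕ) (hl : l < t)
    (z y : ℂ) (hz : ‖z‖ < 1) (hy0 : y ≠ 0) (hy : y ^ t = z) :
    (∑' m : {m : Fin t → ℤ // (∑ i, m i) = 0 ∧ (∑ i : Fin t, ((i : ℕ) : ℤ) * m i) % t = (l : ℤ)},
        y ^ ((t : ℤ) * ((∑ i, (m.1 i) ^ 2) / 2) + ∑ i : Fin t, ((i : ℕ) : ℤ) * m.1 i)) =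
      (∏' k : ℕ, (1 - z ^ (k + 1))) ^ t *
        ∑' m : ℕ, (if m % t = l then (Fintype.card (Nat.Partition m) : ℂ) else 0) * y ^ m :=
  theta_lattice_eq_partition_sum_general t ht l z y hz hy
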